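/- arXiv:2106.10643 — 2 statements merged into one kernel-verified Lean document; each statement's English description precedes it below -/
import Mathlib

section
/- Let $K$ be a field of characteristic $0$, let $h \in K[t]$ be non-constant, and let $\alpha \in \bar{K}^*$. Then for all but finitely many $c \in K^*$, the polynomial $h(t+c) - \alpha h(c) \in \bar{K}[t]$ is separable. -/
open Polynomial

/-- let `K` be a field of characteristic `0`, `h ∈ K[t]` non-constant and
`α ∈ K̄*`. Then for all but finitely many `c ∈ K*`, the polynomial
`h(t + c) - α·h(c) ∈ K̄[t]` is separable (squarefree). -/
theorem stmt14 {K : Type*} [Field K] [CharZero K] (h : Polynomial K) (hh : 0 < h.natDegree)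
    (α : AlgebraicClosure K) (hα : α ≠ 0) :
    {c : K | c ≠ 0 ∧ ¬ Squarefree
        ((h.map (algebraMap K (AlgebraicClosure K))).comp
            (X + Polynomial.C (algebraMap K (AlgebraicClosure K) c)) -
          Polynomial.C (α * algebraMap K (AlgebraicClosure K) (h.eval c)))}.Finite := by
  set φ := algebraMap K (AlgebraicClosure K) with hφ
  set H := h.map φ with hH
  have hφinj : Function.Injective φ := φ.injective
  have hHdeg : 0 < H.natDegree := by rwa [hH, natDegree_map]
  have hHne : H ≠ 0 := fun h0 => by simp [h0] at hHdeg
  have hH'ne : H.derivative ≠ 0 := by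
    intro h0
    have := natDegree_eq_zero_of_derivative_eq_zero h0
    omega
  set V : Set (AlgebraicClosure K) := H.eval '' {μ | H.derivative.eval μ = 0} with hV
  have hVfin : V.Finite := (finite_setOf_isRoot hH'ne).image _
  set T : AlgebraicClosure K → Set K := fun v => {c : K | α * φ (h.eval c) = v} with hT
  have hTfin : ∀ v, (T v).Finite := by
    intro v
    have hsub : φ '' T v ⊆ {x | IsRoot (C α * H - C v) x} := by
      rintro _ ⟨c, hc, rfl⟩
      show (C α * H - C v).eval (φ c) = 0
      rw [eval_sub, eval_mul, eval_C, eval_C, hH, eval_map, eval₂_at_apply, hc.out, sub_self]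
    have hne : C α * H - C v ≠ 0 := by
      intro h0
      have h1 : (C α * H - C v).natDegree = H.natDegree := by
        rw [natDegree_sub_C, natDegree_C_mul hα]
      rw [h0] at h1; simp at h1; omega
    exact Set.Finite.of_finite_image ((finite_setOf_isRoot hne).subset hsub) hφinj.injOn
  apply Set.Finite.subset (Set.Finite.biUnion hVfin (fun v _ => hTfin v))
  rintro c ⟨hc0, hsq⟩
  set p : (AlgebraicClosure K)[X] := H.comp (X + C (φ c)) - C (α * φ (h.eval c)) with hp
  have hpdeg : p.natDegree = H.natDegree := by
    rw [hp, natDegree_sub_C, natDegree_comp, natDegree_X_add_C, mul_one]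
  have hpne : p ≠ 0 := fun h0 => by rw [h0] at hpdeg; simp at hpdeg; omega
  rw [Squarefree] at hsq
  push_neg at hsq
  obtain ⟨q, hqd, hqu⟩ := hsq
  have hqne : q ≠ 0 := by rintro rfl; simp at hqd; exact hpne hqd
  have hqdeg : q.degree ≠ 0 := fun h0 => hqu (isUnit_iff_degree_eq_zero.mpr h0)
  obtain ⟨y, hy⟩ := IsAlgClosed.exists_root q hqdeg
  have hXy : (X - C y) ∣ q := dvd_iff_isRoot.mpr hy
  have hsqd : (X - C y) ^ 2 ∣ p := by
    rw [sq]; exact (mul_dvd_mul hXy hXy).trans hqd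
  obtain ⟨r, hr⟩ := hsqd
  have hpe : p.eval y = 0 := by rw [hr]; simp
  have hpde : p.derivative.eval y = 0 := by
    rw [hr, derivative_mul, derivative_pow]
    simp
  have hd : p.derivative = H.derivative.comp (X + C (φ c)) := by
    rw [hp, derivative_sub, derivative_C, sub_zero, derivative_comp]
    simp
  have hcrit : H.derivative.eval (y + φ c) = 0 := by
    rw [hd] at hpde
    simpa using hpde
  have hval : H.eval (y + φ c) = α * φ (h.eval c) := by
    rw [hp] at hpe
    simp only [eval_sub, eval_C, eval_comp, eval_add, eval_X, sub_eq_zero] at hpe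
    exact hpe
  exact Set.mem_biUnion ⟨y + φ c, hcrit, rfl⟩ hval.symm
end

section
/- Let $K$ be a number field and $v_0$ an odd non-archimedean place of $K$. Then there exists a nonzero $a \in \mathcal{O}_K$ such that: (i) $v_0(a)$ is odd; (ii) $a$ is positive at every real place of $K$; and (iii) $a$ is a square in $K_v$ for every place $v$ of $K$ dividing $2$. -/
/-!
Choose a uniformizer `π` at `v₀`. Since `v₀ ∤ 2`, the Chinese remainder theorem gives `b` with
`b ≡ π mod v₀²` and `b ≡ 1 mod 8`; adding a large multiple of the positive integer
`N(v₀² · 8) ∈ v₀² · 8` makes `b` totally positive without changing these congruences. The result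
`a` has `v₀(a) = 1`, and at each `w ∣ 2` it satisfies `|a - 1|_w ≤ |2|_w³ < |2|_w²`, which forces
`a` to be a square in `K_w`: the map `z ↦ (a - 1 - z²) / 2` is a contraction near `0` whose fixed
point `ℓ` satisfies `a = (1 + ℓ)²`.
-/

open Metric Set IsDedekindDomain NumberField

theorem isSquare_of_norm_sub_one_lt {L : Type*} [NormedField L] [IsUltrametricDist L]
    [CompleteSpace L] {u : L} (h : ‖u - 1‖ < ‖(2 : L)‖ ^ 2) : IsSquare u := by
  set t := u - 1
  have h2 : 0 < ‖(2 : L)‖ := by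
    refine (norm_nonneg _).lt_of_ne fun h0 => ?_
    rw [← h0] at h
    linarith [norm_nonneg t]
  set ρ := ‖t‖ / ‖(2 : L)‖
  have hρ : ρ * ρ ≤ ‖t‖ := by
    have : ‖t‖ * ‖t‖ ≤ ‖t‖ * ‖(2 : L)‖ ^ 2 := mul_le_mul_of_nonneg_left h.le (norm_nonneg t)
    rw [div_mul_div_comm, div_le_iff₀ (by positivity)]
    nlinarith
  set F : L → L := fun z => (t - z ^ 2) / 2
  have hF : MapsTo F (closedBall 0 ρ) (closedBall 0 ρ) := by
    intro z hz
    rw [mem_closedBall_zero_iff] at hz ⊢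
    have hz2 : ‖z ^ 2‖ ≤ ‖t‖ := by
      rw [norm_pow, sq]
      exact (mul_le_mul hz hz (norm_nonneg _) (by positivity)).trans hρ
    simp only [F, norm_div]
    refine div_le_div_of_nonneg_right ?_ h2.le
    rw [sub_eq_add_neg]
    exact (IsUltrametricDist.norm_add_le_max _ _).trans (max_le le_rfl ((norm_neg _).trans_le hz2))
  have hcontr : ContractingWith ⟨‖t‖ / ‖(2 : L)‖ ^ 2, by positivity⟩ (hF.restrict F _ _) := by
    refine ⟨?_, LipschitzWith.of_dist_le_mul fun a b => ?_⟩
    · show ‖t‖ / ‖(2 : L)‖ ^ 2 < 1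
      rwa [div_lt_one (by positivity)]
    · have ha := mem_closedBall_zero_iff.mp a.2
      have hb := mem_closedBall_zero_iff.mp b.2
      have hab : ‖(b : L) + a‖ ≤ ρ :=
        (IsUltrametricDist.norm_add_le_max _ _).trans (max_le hb ha)
      have : F a - F b = (b + a) * (b - a) / 2 := by simp only [F]; ring
      simp only [Subtype.dist_eq, MapsTo.val_restrict_apply, dist_eq_norm, this, norm_div,
        norm_mul, norm_sub_rev (b : L)]
      calc ‖(b : L) + a‖ * ‖(a : L) - b‖ / ‖(2 : L)‖ ≤ ρ * ‖(a : L) - b‖ / ‖(2 : L)‖ := by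
            gcongr
        _ = ‖t‖ / ‖(2 : L)‖ ^ 2 * ‖(a : L) - b‖ := by simp only [ρ]; field_simp
  obtain ⟨ℓ, -, hℓ, -⟩ := hcontr.exists_fixedPoint' isClosed_closedBall.isComplete hF
    (mem_closedBall_self (by positivity)) (edist_ne_top 0 (F 0))
  refine ⟨1 + ℓ, ?_⟩
  have : (t - ℓ ^ 2) / 2 = ℓ := hℓ
  have h2' : (2 : L) ≠ 0 := norm_pos_iff.mp h2
  field_simp at this
  linear_combination this

theorem exists_nat_forall_pos_add_mul {ι : Type*} [Finite ι] (f : ι → ℝ) {c : ℝ} (hc : 0 < c) :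
    ∃ k : ℕ, ∀ i, 0 < f i + k * c := by
  obtain ⟨M, hM⟩ := (Set.finite_range f).bddBelow
  obtain ⟨k, hk⟩ := exists_nat_gt (-M / c)
  rw [div_lt_iff₀ hc] at hk
  exact ⟨k, fun i => by linarith [hM (Set.mem_range_self i)]⟩

theorem Ideal.exists_sub_mem_and_sub_mem_of_isCoprime {R : Type*} [CommRing R] {I J : Ideal R}
    (h : IsCoprime I J) (x y : R) : ∃ b : R, b - x ∈ I ∧ b - y ∈ J := by
  obtain ⟨i, hi, j, hj, hij⟩ := Ideal.isCoprime_iff_exists.mp h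
  refine ⟨x * j + y * i, ?_, ?_⟩
  · rw [show x * j + y * i - x = (y - x) * i by linear_combination x * hij]
    exact I.mul_mem_left _ hi
  · rw [show x * j + y * i - y = (x - y) * j by linear_combination y * hij]
    exact J.mul_mem_left _ hj

theorem IsDedekindDomain.HeightOneSpectrum.intValuation_eq_of_sub_mem_pow_succ {R : Type*}
    [CommRing R] [IsDedekindDomain R] (v : HeightOneSpectrum R) {π a : R} {n : ℕ}
    (hπ : v.intValuation π = WithZero.exp (-(n : ℤ))) (ha : a - π ∈ v.asIdeal ^ (n + 1)) :
    v.intValuation a = WithZero.exp (-(n : ℤ)) := by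
  refine (Valuation.map_eq_of_sub_lt _ ?_).trans hπ
  rw [hπ]
  refine ((v.intValuation_le_pow_iff_mem _ (n + 1)).mpr ha).trans_lt ?_
  rw [WithZero.exp_lt_exp]
  omega

theorem NumberField.exists_totallyPositive_sub_mem {K : Type*} [Field K] [NumberField K]
    {I : Ideal (𝓞 K)} (hI : I ≠ ⊥) (b : 𝓞 K) :
    ∃ a : 𝓞 K, a - b ∈ I ∧ ∀ φ : K →+* ℝ, 0 < φ (algebraMap (𝓞 K) K a) := by
  have hN : (0 : ℝ) < Ideal.absNorm I := by
    exact_mod_cast Nat.pos_of_ne_zero (Ideal.absNorm_eq_zero_iff.not.mpr hI)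
  obtain ⟨k, hk⟩ :=
    exists_nat_forall_pos_add_mul (fun φ : K →+* ℝ => φ (algebraMap (𝓞 K) K b)) hN
  refine ⟨b + k * Ideal.absNorm I, ?_, fun φ => by simpa using hk φ⟩
  rw [add_sub_cancel_left]
  exact I.mul_mem_left _ (Ideal.absNorm_mem I)

theorem IsDedekindDomain.HeightOneSpectrum.isSquare_algebraMap_adicCompletion_of_eight_dvd_sub_one
    {K : Type*} [Field K] [NumberField K] (w : HeightOneSpectrum (𝓞 K))
    (h2 : (2 : 𝓞 K) ∈ w.asIdeal) {x : 𝓞 K} (hx : (8 : 𝓞 K) ∣ x - 1) :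
    IsSquare (algebraMap K (w.adicCompletion K) (algebraMap (𝓞 K) K x)) := by
  obtain ⟨m, hm⟩ := hx
  have hnorm2 : ‖(2 : w.adicCompletion K)‖ < 1 := by
    simpa only [map_ofNat] using (FinitePlace.norm_lt_one_iff_mem K w 2).mpr h2
  have hnorm2_pos : 0 < ‖(2 : w.adicCompletion K)‖ := by
    simpa only [map_ofNat, norm_pos_iff] using
      (map_ne_zero (FinitePlace.embedding w)).mpr (two_ne_zero (α := K))
  have hsub : algebraMap K (w.adicCompletion K) (algebraMap (𝓞 K) K x) - 1
      = 2 ^ 3 * algebraMap K (w.adicCompletion K) (algebraMap (𝓞 K) K m) := by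
    have := congrArg (fun y => algebraMap K (w.adicCompletion K) (algebraMap (𝓞 K) K y)) hm
    simp only [map_sub, map_one, map_mul, map_ofNat] at this
    rw [this]
    norm_num
  apply isSquare_of_norm_sub_one_lt
  calc _ = ‖(2 : w.adicCompletion K)‖ ^ 3
          * ‖algebraMap K (w.adicCompletion K) (algebraMap (𝓞 K) K m)‖ := by
        rw [hsub, norm_mul, norm_pow]
    _ ≤ ‖(2 : w.adicCompletion K)‖ ^ 3 :=
        mul_le_of_le_one_right (by positivity) (FinitePlace.norm_le_one K w m)
    _ < ‖(2 : w.adicCompletion K)‖ ^ 2 :=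
        pow_lt_pow_right_of_lt_one₀ hnorm2_pos hnorm2 (by norm_num)

/-- let `K` be a number field and `v₀` an odd non-archimedean place of `K`
(a finite place, i.e. a nonzero prime of `𝒪_K`, not dividing `2`). Then there exists a
nonzero `a ∈ 𝒪_K` such that: (i) `v₀(a)` is odd; (ii) `a` is positive at every real place
of `K` (i.e. under every real embedding `K → ℝ`); (iii) `a` is a square in the completion
`K_w` for every place `w` dividing `2`. -/
theorem stmt17 {K : Type*} [Field K] [NumberField K]
    (v₀ : IsDedekindDomain.HeightOneSpectrum (𝓞 K))
    (hodd : (2 : 𝓞 K) ∉ v₀.asIdeal) :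
    ∃ a : 𝓞 K, a ≠ 0 ∧
      (∃ n : ℕ, Odd n ∧
        v₀.intValuation a = ((Multiplicative.ofAdd (-(n : ℤ)) : Multiplicative ℤ) : WithZero (Multiplicative ℤ))) ∧
      (∀ φ : K →+* ℝ, 0 < φ (algebraMap (𝓞 K) K a)) ∧
      (∀ w : IsDedekindDomain.HeightOneSpectrum (𝓞 K), (2 : 𝓞 K) ∈ w.asIdeal →
        IsSquare (algebraMap K (w.adicCompletion K) (algebraMap (𝓞 K) K a))) := by
  obtain ⟨π, hπ⟩ := v₀.intValuation_exists_uniformizer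
  have hcop : IsCoprime (v₀.asIdeal ^ 2) (Ideal.span {(8 : 𝓞 K)}) := by
    have h2 : IsCoprime v₀.asIdeal (Ideal.span {(2 : 𝓞 K)}) :=
      Ideal.isCoprime_iff_sup_eq.mpr <| v₀.isMaximal.out.lt_iff.mp <|
        left_lt_sup.mpr fun h => hodd (h (Ideal.mem_span_singleton_self 2))
    have h8 := h2.pow (m := 2) (n := 3)
    rwa [Ideal.span_singleton_pow, show (2 : 𝓞 K) ^ 3 = 8 by norm_num] at h8
  obtain ⟨b, hbπ, hb1⟩ := Ideal.exists_sub_mem_and_sub_mem_of_isCoprime hcop π 1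
  obtain ⟨a, hab, hpos⟩ := exists_totallyPositive_sub_mem (I := v₀.asIdeal ^ 2 * Ideal.span {8})
    (mul_ne_zero (pow_ne_zero 2 v₀.ne_bot) (by simp)) b
  have haπ : a - π ∈ v₀.asIdeal ^ 2 := by
    simpa using add_mem (Ideal.mul_le_left hab) hbπ
  have ha1 : a - 1 ∈ Ideal.span {(8 : 𝓞 K)} := by
    simpa using add_mem (Ideal.mul_le_right hab) hb1
  have hval : v₀.intValuation a = WithZero.exp (-((1 : ℕ) : ℤ)) :=
    v₀.intValuation_eq_of_sub_mem_pow_succ (by simpa using hπ) haπ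
  refine ⟨a, fun h => WithZero.exp_ne_zero (hval.symm.trans (by rw [h, map_zero])),
    ⟨1, odd_one, hval⟩, hpos, fun w hw => ?_⟩
  exact w.isSquare_algebraMap_adicCompletion_of_eight_dvd_sub_one hw
    (Ideal.mem_span_singleton.mp ha1)
end
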